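/- First-order Rusanov/local Lax–Friedrichs monotonicity in the scalar case: let T be a triangle with vertex values u1, u2, u3, average ū = (u1+u2+u3)/3, and define for vertex 1 the residual Φ1 = (1/3)|T| a·g + α(u1 − ū), where g is the (constant) gradient of the P1 interpolant of (u1,u2,u3) on T, a ∈ ℝ² is constant, and α ≥ max_i |a·n_i| where n_i are the scaled inward normals of T satisfying |T| g = −(1/2)Σ_i u_i n_i. Then Φ1 can be written as Σ_{j≠1} c_{1j}(u1 − u_j) with coefficients c_{1j} ≥ 0. -/
import Mathlib

theorem stmt16 (u : Fin 3 → ℝ) (a : ℝ × ℝ) (n : Fin 3 → ℝ × ℝ)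
    (hn : n 0 + n 1 + n 2 = 0)
    (area : ℝ) (harea : 0 < area) (g : ℝ × ℝ)
    (hg : area * (a.1 * g.1 + a.2 * g.2)
        = -(1/2) * ∑ i, u i * (a.1 * (n i).1 + a.2 * (n i).2))
    (α : ℝ) (hα : ∀ i, |a.1 * (n i).1 + a.2 * (n i).2| ≤ α)
    (Φ : ℝ)
    (hΦ : Φ = (1/3) * area * (a.1 * g.1 + a.2 * g.2)
        + α * (u 0 - (u 0 + u 1 + u 2) / 3)) :
    ∃ c2 c3 : ℝ, 0 ≤ c2 ∧ 0 ≤ c3 ∧ Φ = c2 * (u 0 - u 1) + c3 * (u 0 - u 2) := by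
  set k : Fin 3 → ℝ := fun i => a.1 * (n i).1 + a.2 * (n i).2 with hk
  have hksum : k 0 + k 1 + k 2 = 0 := by
    have h1 : (n 0).1 + (n 1).1 + (n 2).1 = 0 := by
      have := congrArg Prod.fst hn; simpa using this
    have h2 : (n 0).2 + (n 1).2 + (n 2).2 = 0 := by
      have := congrArg Prod.snd hn; simpa using this
    simp only [hk]; linear_combination a.1 * h1 + a.2 * h2
  have h1 := hα 1
  have h2 := hα 2
  refine ⟨α/3 + k 1 / 6, α/3 + k 2 / 6, ?_, ?_, ?_⟩
  · have := abs_le.mp h1; linarith [this.1, this.2]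
  · have := abs_le.mp h2; linarith [this.1, this.2]
  · have hsum : ∑ i, u i * k i = u 0 * k 0 + u 1 * k 1 + u 2 * k 2 := by
      simp [Fin.sum_univ_three]
    have hg' : area * (a.1 * g.1 + a.2 * g.2)
        = -(1/2) * (u 0 * k 0 + u 1 * k 1 + u 2 * k 2) := by
      rw [hg, hsum]
    have hk0 : k 0 = -(k 1 + k 2) := by linarith
    rw [hΦ]
    have : (1/3) * area * (a.1 * g.1 + a.2 * g.2)
        = (1/3) * (-(1/2) * (u 0 * k 0 + u 1 * k 1 + u 2 * k 2)) := by
      rw [← hg']; ring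
    rw [this, hk0]; ring
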